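/- Let X₁, X₂, X₃, … be i.i.d. ℕ-valued random variables on a probability space (Ω,P), let k ∈ ℕ, and write p_ℓ := P(X₁ = ℓ) for ℓ ∈ ℕ. For j = 0,…,k define y_j := ∑_{(n₁,…,n_k)} ( j! / (n₁!·⋯·n_k!) ) · ∏_{ℓ=1}^{k} p_ℓ^{n_ℓ}, the sum ranging over all tuples (n₁,…,n_k) ∈ ℕ^k with ∑_{ℓ=1}^{k} n_ℓ = j and ∑_{ℓ=1}^{k} ℓ·n_ℓ ≤ k (so in particular y₀ = 1). Then for all n ∈ ℕ: P( ∑_{i=1}^{n} X_i ≤ k ) = ∑_{j=0}^{k} C(n,j) · p₀^{n−j} · y_j, where C(n,j) is the binomial coefficient (equal to 0 for j > n). -/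

import Mathlib

/-!
Let `G = ∑ p_ℓ xˡ` be the probability generating series of `X₀`. Independence turns the law of
`X₀ + ⋯ + X_{n-1}` into the convolution power `Gⁿ`, so `P(∑ X_i ≤ k)` is the sum of the coefficients
of `Gⁿ` in degrees `≤ k`. These coefficients only depend on the truncation `p₀ + T`, where
`T = ∑_{ℓ=1}^k p_ℓ xˡ`. Expanding `(p₀ + T)ⁿ` binomially and `Tʲ` multinomially, the monomial of
`(n₁, …, n_k)` has degree `∑ ℓ n_ℓ`, which leaves exactly the tuples defining `y_j`; since
`j = ∑ n_ℓ ≤ ∑ ℓ n_ℓ`, no tuple survives once `j > k`.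
-/

open MeasureTheory ProbabilityTheory Finset

theorem Finset.sum_range_succ_eq_sum_range_succ_of_eq_zero {M : Type*} [AddCommMonoid M]
    {f : ℕ → M} {n k : ℕ} (hn : ∀ j, n < j → f j = 0) (hk : ∀ j, k < j → f j = 0) :
    ∑ j ∈ range (n + 1), f j = ∑ j ∈ range (k + 1), f j := by
  wlog hnk : n ≤ k generalizing n k
  · exact (this hk hn (by omega)).symm
  refine sum_subset (range_subset_range.mpr (by omega)) fun j _ hj => hn j ?_
  simpa using hj

theorem Finset.sum_filter_piAntidiag_eq_sum_fin {ι M : Type*} [Fintype ι] [DecidableEq ι]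
    [AddCommMonoid M] (w : ι → ℕ) (hw : ∀ i, 0 < w i) (j k : ℕ) (F : (ι → ℕ) → M) :
    ∑ m ∈ univ.piAntidiag j with ∑ i, w i * m i ≤ k, F m
      = ∑ m : ι → Fin (k + 1) with ∑ i, (m i : ℕ) = j ∧ ∑ i, w i * m i ≤ k,
          F fun i => m i := by
  have h_lt : ∀ m : ι → ℕ, ∑ i, w i * m i ≤ k → ∀ i, m i < k + 1 := fun m hm i =>
    Nat.lt_succ_of_le <| (Nat.le_mul_of_pos_left _ (hw i)).trans <|
      (single_le_sum (fun i _ => Nat.zero_le (w i * m i)) (mem_univ i)).trans hm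
  symm
  refine sum_nbij' (fun m i => m i) (fun m i => Fin.ofNat (k + 1) (m i))
    (fun m hm => ?_) (fun m hm => ?_) (fun m _ => ?_) (fun m hm => ?_) fun _ _ => rfl
  · simpa [mem_piAntidiag] using hm
  · simp only [mem_filter, mem_piAntidiag] at hm
    simp [Nat.mod_eq_of_lt (h_lt m hm.2 _), hm]
  · simp
  · simp only [mem_filter] at hm
    funext i
    simp [Nat.mod_eq_of_lt (h_lt m hm.2 i)]

namespace PowerSeries

variable {R : Type*} [CommSemiring R]

theorem sum_monomial_pow {ι : Type*} [DecidableEq ι] (s : Finset ι) (e : ι → ℕ) (c : ι → R)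
    (j : ℕ) :
    (∑ i ∈ s, monomial (e i) (c i)) ^ j =
      ∑ m ∈ s.piAntidiag j,
        monomial (∑ i ∈ s, e i * m i) (Nat.multinomial s m * ∏ i ∈ s, c i ^ m i) := by
  rw [sum_pow_eq_sum_piAntidiag]
  refine sum_congr rfl fun m _ => ?_
  simp only [monomial_pow, prod_monomial, ← map_natCast (C (R := R)), ← monomial_zero_eq_C_apply,
    monomial_mul_monomial, zero_add, mul_comm (m _)]

theorem sum_range_coeff_sum_monomial {ι : Type*} (s : Finset ι) (e : ι → ℕ) (c : ι → R)
    (k : ℕ) :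
    ∑ t ∈ range (k + 1), coeff t (∑ i ∈ s, monomial (e i) (c i)) = ∑ i ∈ s with e i ≤ k, c i := by
  simp only [map_sum, coeff_monomial]
  rw [sum_comm, sum_filter]
  refine sum_congr rfl fun i _ => ?_
  simp

theorem coeff_trunc_pow (f : R⟦X⟧) {s N : ℕ} (hs : s < N) (n : ℕ) :
    coeff s ((trunc N f : R⟦X⟧) ^ n) = coeff s (f ^ n) := by
  have h := congr_arg (Polynomial.coeff · s) (trunc_trunc_pow f N n)
  simp only [coeff_trunc, hs, if_true] at h
  exact h

theorem coe_trunc_succ_mk (p : ℕ → R) (k : ℕ) :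
    (trunc (k + 1) (mk p) : R⟦X⟧) = ∑ ℓ : Fin k, monomial (ℓ + 1) (p (ℓ + 1)) + C (p 0) := by
  rw [trunc_apply, ← range_eq_Ico, sum_range_succ', sum_range,
    ← Polynomial.coeToPowerSeries.ringHom_apply]
  simp only [map_add, map_sum, Polynomial.coeToPowerSeries.ringHom_apply,
    Polynomial.coe_monomial, coeff_mk, monomial_zero_eq_C_apply]

theorem sum_range_coeff_add_C_pow (f : R⟦X⟧) (a : R) (k n : ℕ) :
    ∑ s ∈ range (k + 1), coeff s ((f + C a) ^ n)
      = ∑ j ∈ range (n + 1), n.choose j * a ^ (n - j) * ∑ s ∈ range (k + 1), coeff s (f ^ j) := by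
  simp only [add_pow, map_sum, ← map_pow, ← map_natCast (C (R := R)), coeff_mul_C, mul_sum]
  rw [sum_comm]
  exact sum_congr rfl fun j _ => sum_congr rfl fun s _ => by ring

theorem sum_range_coeff_mk_pow (p : ℕ → R) (k n : ℕ) :
    ∑ s ∈ range (k + 1), coeff s (mk p ^ n)
      = ∑ j ∈ range (k + 1), n.choose j * p 0 ^ (n - j) *
          ∑ m ∈ (univ : Finset (Fin k)).piAntidiag j with ∑ ℓ : Fin k, ((ℓ : ℕ) + 1) * m ℓ ≤ k,
            Nat.multinomial univ m * ∏ ℓ : Fin k, p (ℓ + 1) ^ m ℓ := by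
  set T : R⟦X⟧ := ∑ ℓ : Fin k, monomial (ℓ + 1) (p (ℓ + 1))
  have h_trunc : ∀ s ∈ range (k + 1), coeff s (mk p ^ n) = coeff s ((T + C (p 0)) ^ n) :=
    fun s hs => by rw [← coe_trunc_succ_mk, coeff_trunc_pow _ (mem_range.mp hs)]
  have h_vanish : ∀ j, k < j → ∀ m ∈ (univ : Finset (Fin k)).piAntidiag j,
      ¬ ∑ ℓ : Fin k, ((ℓ : ℕ) + 1) * m ℓ ≤ k := by
    intro j hj m hm
    rw [mem_piAntidiag] at hm
    have : j ≤ ∑ ℓ : Fin k, ((ℓ : ℕ) + 1) * m ℓ :=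
      hm.1 ▸ sum_le_sum fun ℓ _ => Nat.le_mul_of_pos_left _ ℓ.succ_pos
    omega
  rw [sum_congr rfl h_trunc, sum_range_coeff_add_C_pow]
  simp only [T, sum_monomial_pow, sum_range_coeff_sum_monomial]
  refine sum_range_succ_eq_sum_range_succ_of_eq_zero (fun j hj => ?_) fun j hj => ?_
  · simp [Nat.choose_eq_zero_of_lt hj]
  · rw [filter_false_of_mem (h_vanish j hj)]
    simp

end PowerSeries

namespace ProbabilityTheory

variable {Ω : Type*} [MeasurableSpace Ω]

noncomputable def pgf (P : Measure Ω) (Y : Ω → ℕ) : PowerSeries ℝ :=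
  PowerSeries.mk fun ℓ => P.real {ω | Y ω = ℓ}

theorem measureReal_sum_range_eq_coeff_pgf_pow {P : Measure Ω} [IsProbabilityMeasure P]
    {X : ℕ → Ω → ℕ} (hX : ∀ i, Measurable (X i)) (hind : iIndepFun X P)
    (hid : ∀ i, IdentDistrib (X i) (X 0) P P) (n s : ℕ) :
    P.real {ω | ∑ i ∈ range n, X i ω = s} = PowerSeries.coeff s (pgf P (X 0) ^ n) := by
  induction n generalizing s with
  | zero =>
    rcases eq_or_ne s 0 with rfl | hs
    · simp
    · simp [PowerSeries.coeff_one, hs, Ne.symm hs]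
  | succ n ih =>
    have h_indep : IndepFun (fun ω => ∑ i ∈ range n, X i ω) (X n) P := by
      simpa only [sum_fn] using hind.indepFun_finsetSum_of_notMem hX notMem_range_self
    have h_meas : Measurable fun ω => ∑ i ∈ range n, X i ω := measurable_sum _ fun i _ => hX i
    calc P.real {ω | ∑ i ∈ range (n + 1), X i ω = s}
        = ∑ x ∈ antidiagonal s, P.real ((fun ω => (∑ i ∈ range n, X i ω, X n ω)) ⁻¹' {x}) := by
          rw [sum_measureReal_preimage_singleton]
          · congr 1
            ext ω
            simp [sum_range_succ]
          · exact fun x _ => (measurableSet_singleton x).preimage (h_meas.prodMk (hX n))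
      _ = ∑ x ∈ antidiagonal s,
            P.real {ω | ∑ i ∈ range n, X i ω = x.1} * P.real {ω | X 0 ω = x.2} := by
          refine sum_congr rfl fun x _ => ?_
          have h_fiber : (fun ω => (∑ i ∈ range n, X i ω, X n ω)) ⁻¹' {x}
              = (fun ω => ∑ i ∈ range n, X i ω) ⁻¹' {x.1} ∩ X n ⁻¹' {x.2} := by
            ext ω
            simp [Prod.ext_iff]
          rw [h_fiber, measureReal_def, h_indep.measure_inter_preimage_eq_mul _ _
            (measurableSet_singleton _) (measurableSet_singleton _),
            (hid n).measure_mem_eq (measurableSet_singleton _), ENNReal.toReal_mul]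
          rfl
      _ = PowerSeries.coeff s (pgf P (X 0) ^ (n + 1)) := by
          rw [pow_succ, PowerSeries.coeff_mul]
          simp [ih, pgf]

end ProbabilityTheory

/-- The explicit form of Lemma B.2: for i.i.d. ℕ-valued random variables `X₀, X₁, …`,
with `p_ℓ = P(X₀ = ℓ)` and `y_j` the multinomial sums over tuples `(n₁,…,n_k)` with
`∑ n_ℓ = j` and `∑ ℓ·n_ℓ ≤ k`,
`P(∑_{i<n} X_i ≤ k) = ∑_{j=0}^k C(n,j) p₀^{n-j} y_j` for all `n`. -/
theorem cdf_sum_of_indep_copies_explicit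
    {Ω : Type*} [MeasurableSpace Ω] (P : Measure Ω) [IsProbabilityMeasure P]
    (X : ℕ → Ω → ℕ) (hX : ∀ i, Measurable (X i))
    (hind : iIndepFun X P)
    (hid : ∀ i j, IdentDistrib (X i) (X j) P P)
    (k n : ℕ) :
    (P {ω | ∑ i ∈ Finset.range n, X i ω ≤ k}).toReal
      = ∑ j ∈ Finset.range (k + 1),
          (n.choose j : ℝ) * (P {ω | X 0 ω = 0}).toReal ^ (n - j)
            * ∑ m ∈ Finset.univ.filter
                (fun m : Fin k → Fin (k + 1) =>
                  (∑ ℓ : Fin k, (m ℓ : ℕ)) = j ∧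
                    ∑ ℓ : Fin k, ((ℓ : ℕ) + 1) * (m ℓ : ℕ) ≤ k),
                (Nat.multinomial Finset.univ (fun ℓ : Fin k => (m ℓ : ℕ)) : ℝ)
                  * ∏ ℓ : Fin k, (P {ω | X 0 ω = (ℓ : ℕ) + 1}).toReal ^ (m ℓ : ℕ) := by
  have h_meas : Measurable fun ω => ∑ i ∈ range n, X i ω := measurable_sum _ fun i _ => hX i
  have h_cdf : P.real {ω | ∑ i ∈ range n, X i ω ≤ k}
      = ∑ s ∈ range (k + 1), P.real {ω | ∑ i ∈ range n, X i ω = s} := by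
    have h_set : {ω | ∑ i ∈ range n, X i ω ≤ k}
        = (fun ω => ∑ i ∈ range n, X i ω) ⁻¹' ↑(range (k + 1)) := by
      ext ω
      simp
    rw [h_set, ← sum_measureReal_preimage_singleton _ fun s _ => h_meas (measurableSet_singleton s)]
    rfl
  rw [← measureReal_def, h_cdf]
  simp only [measureReal_sum_range_eq_coeff_pgf_pow hX hind (fun i => hid i 0), pgf,
    PowerSeries.sum_range_coeff_mk_pow,
    sum_filter_piAntidiag_eq_sum_fin (fun ℓ : Fin k => (ℓ : ℕ) + 1) fun ℓ => ℓ.succ_pos]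
  rfl
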